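/- Let V : ℝ² → ℝ be continuously differentiable and suppose that for every x ∈ ℝ² the function t ↦ V(tx) − ½⟨∇V(tx), tx⟩ is nondecreasing on (0, ∞). Then for every x ∈ ℝ² and every t > 0 one has t²·V(x) + ((1−t²)/2)·⟨∇V(x), x⟩ ≥ t²·V(t⁻¹x). -/

import Mathlib

open scoped InnerProductSpace

abbrev E2 := EuclideanSpace ℝ (Fin 2)

/-!
Fix `x` and set `D y := V y - ½⟪∇V y, y⟫`. The function
`F u := u² (V (u⁻¹ • x) - D x)` has derivative `2u (D (u⁻¹ • x) - D x)`, which by the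
monotonicity of `s ↦ D (s • x)` is `≥ 0` for `u < 1` and `≤ 0` for `u > 1`. Hence
`F t ≤ F 1 = ½⟪∇V x, x⟫`, which rearranges to the claim.
-/

open Set

theorem isMaxOn_Ioi_of_hasDerivAt_sign_change {f f' : ℝ → ℝ} {a c : ℝ} (hc : a < c)
    (hf : ∀ u ∈ Ioi a, HasDerivAt f (f' u) u) (hinc : ∀ u ∈ Ioo a c, 0 ≤ f' u)
    (hdec : ∀ u ∈ Ioi c, f' u ≤ 0) : IsMaxOn f (Ioi a) c := by
  have hcont : ContinuousOn f (Ioi a) := fun u hu =>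
    (hf u hu).continuousAt.continuousWithinAt
  have hmono : MonotoneOn f (Ioc a c) := by
    refine monotoneOn_of_hasDerivWithinAt_nonneg (f' := f') (convex_Ioc a c)
      (hcont.mono Ioc_subset_Ioi_self) (fun u hu => ?_) (fun u hu => ?_)
    all_goals rw [interior_Ioc] at hu
    · exact (hf u hu.1).hasDerivWithinAt
    · exact hinc u hu
  have hanti : AntitoneOn f (Ici c) := by
    refine antitoneOn_of_hasDerivWithinAt_nonpos (f' := f') (convex_Ici c)
      (hcont.mono (Ici_subset_Ioi.2 hc)) (fun u hu => ?_) (fun u hu => ?_)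
    all_goals rw [interior_Ici] at hu
    · exact (hf u (hc.trans hu)).hasDerivWithinAt
    · exact hdec u hu
  intro u hu
  rcases le_total u c with huc | hcu
  · exact hmono ⟨hu, huc⟩ (right_mem_Ioc.2 hc) huc
  · exact hanti self_mem_Ici hcu hcu

section Defect

variable {E : Type*} [NormedAddCommGroup E] [InnerProductSpace ℝ E] [CompleteSpace E]

/-- Vanishes identically when `V` is homogeneous of degree `2` (Euler's identity). -/
noncomputable def eulerDefect (V : E → ℝ) (y : E) : ℝ :=
  V y - (1 / 2) * ⟪gradient V y, y⟫_ℝ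

theorem hasDerivAt_sq_mul_comp_inv_smul {V : E → ℝ} {x : E} {t : ℝ} (ht : t ≠ 0)
    (hV : DifferentiableAt ℝ V (t⁻¹ • x)) :
    HasDerivAt (fun u : ℝ => u ^ 2 * V (u⁻¹ • x)) (2 * t * eulerDefect V (t⁻¹ • x)) t := by
  have hinv : HasDerivAt (fun u : ℝ => u⁻¹ • x) (-(t ^ 2)⁻¹ • x) t :=
    (hasDerivAt_inv ht).smul_const x
  have hcomp : HasDerivAt (fun u : ℝ => V (u⁻¹ • x))
      (InnerProductSpace.toDual ℝ E (gradient V (t⁻¹ • x)) (-(t ^ 2)⁻¹ • x)) t :=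
    hV.hasGradientAt.hasFDerivAt.comp_hasDerivAt t hinv
  refine ((hasDerivAt_pow 2 t).mul hcomp).congr_deriv ?_
  rw [InnerProductSpace.toDual_apply_apply, real_inner_smul_right, eulerDefect,
    real_inner_smul_right]
  field_simp
  ring

theorem isMaxOn_sq_mul_comp_inv_smul_sub {V : E → ℝ} (hV : Differentiable ℝ V) {x : E}
    (hmono : MonotoneOn (fun s : ℝ => eulerDefect V (s • x)) (Ioi 0)) :
    IsMaxOn (fun u : ℝ => u ^ 2 * V (u⁻¹ • x) - u ^ 2 * eulerDefect V x) (Ioi 0) 1 := by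
  have hderiv : ∀ u ∈ Ioi (0 : ℝ),
      HasDerivAt (fun u : ℝ => u ^ 2 * V (u⁻¹ • x) - u ^ 2 * eulerDefect V x)
        (2 * u * (eulerDefect V (u⁻¹ • x) - eulerDefect V x)) u := fun u hu => by
    have hsq : HasDerivAt (fun u : ℝ => u ^ 2 * eulerDefect V x)
        (2 * u * eulerDefect V x) u := by
      simpa using (hasDerivAt_pow 2 u).mul_const (eulerDefect V x)
    rw [mul_sub]
    exact (hasDerivAt_sq_mul_comp_inv_smul hu.ne' (hV _)).sub hsq
  refine isMaxOn_Ioi_of_hasDerivAt_sign_change zero_lt_one hderiv ?_ ?_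
  · rintro u ⟨hu0, hu1⟩
    have hle := hmono (mem_Ioi.2 one_pos) (mem_Ioi.2 (inv_pos.2 hu0))
      ((one_le_inv₀ hu0).2 hu1.le)
    simp only [one_smul] at hle
    exact mul_nonneg (by positivity) (sub_nonneg.2 hle)
  · rintro u (hu : 1 < u)
    have hle := hmono (mem_Ioi.2 (inv_pos.2 (zero_lt_one.trans hu))) (mem_Ioi.2 one_pos)
      (inv_le_one_of_one_le₀ hu.le)
    simp only [one_smul] at hle
    exact mul_nonpos_of_nonneg_of_nonpos (by positivity) (sub_nonpos.2 hle)

end Defect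

theorem stmt5 (V : E2 → ℝ) (hV : ContDiff ℝ 1 V)
    (hmono : ∀ x : E2, MonotoneOn
      (fun t : ℝ => V (t • x) - (1 / 2) * ⟪gradient V (t • x), t • x⟫_ℝ)
      (Set.Ioi 0)) :
    ∀ x : E2, ∀ t : ℝ, 0 < t →
      t ^ 2 * V (t⁻¹ • x) ≤ t ^ 2 * V x + ((1 - t ^ 2) / 2) * ⟪gradient V x, x⟫_ℝ := by
  intro x t ht
  have hmax := isMaxOn_sq_mul_comp_inv_smul_sub (hV.differentiable one_ne_zero) (hmono x) ht
  have hFt : t ^ 2 * V (t⁻¹ • x) - t ^ 2 * eulerDefect V x ≤ V x - eulerDefect V x := by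
    simpa using hmax
  unfold eulerDefect at hFt
  linear_combination hFt
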